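/- arXiv:2411.17109 — 3 statements merged into one kernel-verified Lean document; each statement's English description precedes it below -/
import Mathlib

section
/- Let X and Y be non-degenerate square-integrable random variables and let R(X,Y) denote the maximal correlation coefficient between them, defined as the supremum of Pearson correlations ρ(φ(X), ψ(Y)) over all measurable φ, ψ with 0 < E[φ(X)²] < ∞ and 0 < E[ψ(Y)²] < ∞. Then R(X,Y) = 0 if and only if X and Y are independent. -/
open MeasureTheory ProbabilityTheory Real

/-- Pearson correlation coefficient of two real random variables. -/
noncomputable def pearson {Ω : Type*} [MeasurableSpace Ω] (μ : Measure Ω)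
    (U V : Ω → ℝ) : ℝ :=
  (∫ ω, (U ω - ∫ ω', U ω' ∂μ) * (V ω - ∫ ω', V ω' ∂μ) ∂μ) /
    (Real.sqrt (variance U μ) * Real.sqrt (variance V μ))

/-- Maximal correlation coefficient: supremum of Pearson correlations ρ(f(X), g(Y)) over
measurable f, g with f(X), g(Y) square-integrable and non-degenerate.  (The supremum of the
empty set is `0`, corresponding to the convention for degenerate variables.) -/
noncomputable def maxCorr {Ω α β : Type*} [MeasurableSpace Ω] [MeasurableSpace α]
    [MeasurableSpace β] (μ : Measure Ω) (X : Ω → α) (Y : Ω → β) : ℝ :=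
  sSup {r | ∃ f : α → ℝ, ∃ g : β → ℝ, Measurable f ∧ Measurable g ∧
    MemLp (f ∘ X) 2 μ ∧ MemLp (g ∘ Y) 2 μ ∧
    variance (f ∘ X) μ ≠ 0 ∧ variance (g ∘ Y) μ ≠ 0 ∧
    r = pearson μ (f ∘ X) (g ∘ Y)}

/-!
The correlations `ρ(φ(X), ψ(Y))` form a set that is bounded by `1` (Cauchy–Schwarz, via the
discriminant of `t ↦ Var(U - tV)`) and symmetric under `φ ↦ -φ`, so its supremum is `0` exactly
when all of them vanish. A correlation vanishes exactly when the covariance does, a degenerate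
variable having zero covariance with everything. Independence kills every covariance
`cov(φ(X), ψ(Y))`; conversely, for indicators `φ = 1_s`, `ψ = 1_t` that covariance is
`P(X ∈ s, Y ∈ t) - P(X ∈ s) P(Y ∈ t)`.
-/

section Correlation

variable {Ω : Type*} [MeasurableSpace Ω] {μ : Measure Ω} {U V : Ω → ℝ}

lemma abs_covariance_le_sqrt_mul_sqrt [IsFiniteMeasure μ] (hU : MemLp U 2 μ) (hV : MemLp V 2 μ) :
    |cov[U, V; μ]| ≤ √Var[U; μ] * √Var[V; μ] := by
  have hquad : ∀ t : ℝ, 0 ≤ Var[V; μ] * (t * t) + (-2 * cov[U, V; μ]) * t + Var[U; μ] := by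
    intro t
    have h := variance_nonneg (U - t • V) μ
    rw [variance_sub hU (hV.const_smul t), variance_smul, covariance_smul_right] at h
    linear_combination h
  have hdiscr := discrim_le_zero hquad
  rw [discrim] at hdiscr
  rw [← Real.sqrt_mul (variance_nonneg U μ)]
  exact Real.abs_le_sqrt (by linear_combination hdiscr / 4)

lemma pearson_eq_covariance_div (U V : Ω → ℝ) :
    pearson μ U V = cov[U, V; μ] / (√Var[U; μ] * √Var[V; μ]) := rfl

lemma abs_pearson_le_one [IsFiniteMeasure μ] (hU : MemLp U 2 μ) (hV : MemLp V 2 μ) :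
    |pearson μ U V| ≤ 1 := by
  rw [pearson_eq_covariance_div, abs_div]
  exact div_le_one_of_le₀ ((abs_covariance_le_sqrt_mul_sqrt hU hV).trans (le_abs_self _))
    (abs_nonneg _)

lemma pearson_eq_zero_iff [IsFiniteMeasure μ] (hU : MemLp U 2 μ) (hV : MemLp V 2 μ) :
    pearson μ U V = 0 ↔ cov[U, V; μ] = 0 := by
  rw [pearson_eq_covariance_div, div_eq_zero_iff]
  refine or_iff_left_of_imp fun h0 => abs_nonpos_iff.mp ?_
  exact h0 ▸ abs_covariance_le_sqrt_mul_sqrt hU hV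

lemma pearson_neg_left (U V : Ω → ℝ) : pearson μ (-U) V = -pearson μ U V := by
  rw [pearson_eq_covariance_div, pearson_eq_covariance_div, covariance_neg_left, variance_neg,
    neg_div]

lemma memLp_indicator_one [IsFiniteMeasure μ] (p : ENNReal) {A : Set Ω} (hA : MeasurableSet A) :
    MemLp (A.indicator (1 : Ω → ℝ)) p μ :=
  memLp_indicator_const p hA 1 (.inr (measure_ne_top μ A))

lemma covariance_indicator_one [IsProbabilityMeasure μ] {A B : Set Ω} (hA : MeasurableSet A)
    (hB : MeasurableSet B) :
    cov[A.indicator 1, B.indicator 1; μ] = μ.real (A ∩ B) - μ.real A * μ.real B := by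
  rw [covariance_eq_sub (memLp_indicator_one 2 hA) (memLp_indicator_one 2 hB),
    ← Set.inter_indicator_one,
    integral_indicator_one (hA.inter hB), integral_indicator_one hA, integral_indicator_one hB]

end Correlation

lemma Real.sSup_eq_zero_iff_of_neg_mem {S : Set ℝ} (hS : BddAbove S) (hneg : ∀ r ∈ S, -r ∈ S) :
    sSup S = 0 ↔ ∀ r ∈ S, r = 0 := by
  refine ⟨fun h r hr => le_antisymm ?_ ?_, fun h => le_antisymm ?_ ?_⟩
  · exact h ▸ le_csSup hS hr
  · exact neg_nonpos.mp (h ▸ le_csSup hS (hneg r hr))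
  · exact Real.sSup_nonpos fun r hr => (h r hr).le
  · exact Real.sSup_nonneg fun r hr => (h r hr).ge

section MaxCorr

variable {Ω α β : Type*} [MeasurableSpace Ω] [MeasurableSpace α] [MeasurableSpace β]
  {μ : Measure Ω}

lemma maxCorr_eq_zero_iff [IsFiniteMeasure μ] (X : Ω → α) (Y : Ω → β) :
    maxCorr μ X Y = 0 ↔ ∀ φ : α → ℝ, ∀ ψ : β → ℝ, Measurable φ → Measurable ψ →
      MemLp (φ ∘ X) 2 μ → MemLp (ψ ∘ Y) 2 μ → cov[φ ∘ X, ψ ∘ Y; μ] = 0 := by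
  rw [maxCorr, Real.sSup_eq_zero_iff_of_neg_mem]
  · refine ⟨fun h φ ψ hφ hψ hU hV => (pearson_eq_zero_iff hU hV).mp ?_, ?_⟩
    · by_cases hvar : Var[φ ∘ X; μ] ≠ 0 ∧ Var[ψ ∘ Y; μ] ≠ 0
      · exact h _ ⟨φ, ψ, hφ, hψ, hU, hV, hvar.1, hvar.2, rfl⟩
      · rw [not_and_or, not_not, not_not] at hvar
        rw [pearson_eq_covariance_div]
        rcases hvar with h0 | h0 <;> simp [h0]
    · rintro h r ⟨φ, ψ, hφ, hψ, hU, hV, -, -, rfl⟩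
      exact (pearson_eq_zero_iff hU hV).mpr (h φ ψ hφ hψ hU hV)
  · refine ⟨1, ?_⟩
    rintro r ⟨φ, ψ, -, -, hU, hV, -, -, rfl⟩
    exact le_of_abs_le (abs_pearson_le_one hU hV)
  · rintro r ⟨φ, ψ, hφ, hψ, hU, hV, hvU, hvV, rfl⟩
    refine ⟨-φ, ψ, hφ.neg, hψ, hU.neg, hV, ?_, hvV, ?_⟩
    · rwa [Pi.neg_comp, variance_neg]
    · rw [Pi.neg_comp, pearson_neg_left]

lemma indepFun_iff_forall_covariance_comp_eq_zero [IsProbabilityMeasure μ] {X : Ω → α}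
    {Y : Ω → β} (hX : Measurable X) (hY : Measurable Y) :
    IndepFun X Y μ ↔ ∀ φ : α → ℝ, ∀ ψ : β → ℝ, Measurable φ → Measurable ψ →
      MemLp (φ ∘ X) 2 μ → MemLp (ψ ∘ Y) 2 μ → cov[φ ∘ X, ψ ∘ Y; μ] = 0 := by
  refine ⟨fun h φ ψ hφ hψ hU hV => (h.comp hφ hψ).covariance_eq_zero hU hV, fun h => ?_⟩
  rw [indepFun_iff_measure_inter_preimage_eq_mul]
  intro s t hs ht
  have hcov := h (s.indicator 1) (t.indicator 1) (measurable_one.indicator hs)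
    (measurable_one.indicator ht)
    (memLp_indicator_one 2 (hX hs)) (memLp_indicator_one 2 (hY ht))
  change cov[(X ⁻¹' s).indicator 1, (Y ⁻¹' t).indicator 1; μ] = 0 at hcov
  rw [covariance_indicator_one (hX hs) (hY ht), sub_eq_zero] at hcov
  rwa [← ENNReal.toReal_eq_toReal_iff' (measure_ne_top μ _)
    (ENNReal.mul_ne_top (measure_ne_top μ _) (measure_ne_top μ _)), ENNReal.toReal_mul]

end MaxCorr

theorem maxCorr_eq_zero_iff_indepFun_general {Ω : Type*} [MeasurableSpace Ω]
    (μ : Measure Ω) [IsProbabilityMeasure μ] (X Y : Ω → ℝ)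
    (hX : Measurable X) (hY : Measurable Y) :
    maxCorr μ X Y = 0 ↔ IndepFun X Y μ := by
  rw [maxCorr_eq_zero_iff, indepFun_iff_forall_covariance_comp_eq_zero hX hY]

/-- For non-degenerate square-integrable real random variables, the maximal correlation
coefficient vanishes iff the variables are independent. -/
theorem maxCorr_eq_zero_iff_indepFun {Ω : Type*} [MeasurableSpace Ω]
    (μ : Measure Ω) [IsProbabilityMeasure μ] (X Y : Ω → ℝ)
    (hX : Measurable X) (hY : Measurable Y)
    (hX2 : MemLp X 2 μ) (hY2 : MemLp Y 2 μ)
    (hXnd : variance X μ ≠ 0) (hYnd : variance Y μ ≠ 0) :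
    maxCorr μ X Y = 0 ↔ IndepFun X Y μ :=
  maxCorr_eq_zero_iff_indepFun_general μ X Y hX hY
end

section
/- Suppose (X₁,Y₁) and (X₂,Y₂) are independent random vectors. Then R((X₁,X₂),(Y₁,Y₂)) = max(R(X₁,Y₁), R(X₂,Y₂)) (Csáki–Fischer identity). -/
open MeasureTheory ProbabilityTheory Real

/-! Condition on the first pair. By the law of total covariance, `cov(f(X₁,X₂), g(Y₁,Y₂))` is the
mean of the conditional covariances plus the covariance of the conditional means. Given `(X₁,Y₁)`,
`f` and `g` are functions of `X₂` and `Y₂`, so each conditional covariance is at most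
`R(X₂,Y₂)` times the product of the conditional standard deviations; the conditional means are
functions of `X₁` and `Y₁`, so their covariance is at most `R(X₁,Y₁)` times the product of their
standard deviations. Cauchy–Schwarz, twice, and the law of total variance bound the sum by
`max R(X₁,Y₁) R(X₂,Y₂) · sd f · sd g`. The reverse inequality holds because `R` can only grow
when the variables are enlarged. -/

section CauchySchwarz

variable {Ω : Type*} [MeasurableSpace Ω] {μ : Measure Ω}

lemma abs_integral_mul_le_sqrt_mul_sqrt {U V : Ω → ℝ} (hU : MemLp U 2 μ) (hV : MemLp V 2 μ) :
    |∫ ω, U ω * V ω ∂μ| ≤ √(∫ ω, U ω ^ 2 ∂μ) * √(∫ ω, V ω ^ 2 ∂μ) := by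
  have holder := integral_mul_norm_le_Lp_mul_Lq Real.HolderConjugate.two_two
    (by simpa using hU) (by simpa using hV)
  simp only [Real.norm_eq_abs, ← abs_mul, Real.rpow_two, sq_abs, ← Real.sqrt_eq_rpow] at holder
  exact abs_integral_le_integral_abs.trans holder

lemma abs_covariance_le_sqrt_variance_mul [IsFiniteMeasure μ] {U V : Ω → ℝ}
    (hU : MemLp U 2 μ) (hV : MemLp V 2 μ) :
    |cov[U, V; μ]| ≤ √Var[U; μ] * √Var[V; μ] := by
  rw [variance_eq_integral hU.aemeasurable, variance_eq_integral hV.aemeasurable]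
  exact abs_integral_mul_le_sqrt_mul_sqrt (hU.sub (memLp_const _)) (hV.sub (memLp_const _))

lemma memLp_two_sqrt {a : Ω → ℝ} (ha : Integrable a μ) (ha0 : 0 ≤ᵐ[μ] a) :
    MemLp (fun ω => √(a ω)) 2 μ := by
  refine (memLp_two_iff_integrable_sq
    ha.aestronglyMeasurable.aemeasurable.sqrt.aestronglyMeasurable).2 (ha.congr ?_)
  filter_upwards [ha0] with ω hω using (Real.sq_sqrt hω).symm

lemma integral_sqrt_mul_sqrt_le {a b : Ω → ℝ} (ha : Integrable a μ) (hb : Integrable b μ)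
    (ha0 : 0 ≤ᵐ[μ] a) (hb0 : 0 ≤ᵐ[μ] b) :
    ∫ ω, √(a ω) * √(b ω) ∂μ ≤ √(∫ ω, a ω ∂μ) * √(∫ ω, b ω ∂μ) := by
  have h := (le_abs_self _).trans
    (abs_integral_mul_le_sqrt_mul_sqrt (memLp_two_sqrt ha ha0) (memLp_two_sqrt hb hb0))
  have hsq : ∀ {c : Ω → ℝ}, 0 ≤ᵐ[μ] c → ∫ ω, √(c ω) ^ 2 ∂μ = ∫ ω, c ω ∂μ := fun hc0 =>
    integral_congr_ae (by filter_upwards [hc0] with ω hω using Real.sq_sqrt hω)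
  rwa [hsq ha0, hsq hb0] at h

end CauchySchwarz

lemma sqrt_mul_sqrt_add_sqrt_mul_sqrt_le {a b c d : ℝ} (ha : 0 ≤ a) (hb : 0 ≤ b) (hc : 0 ≤ c)
    (hd : 0 ≤ d) : √a * √b + √c * √d ≤ √(a + c) * √(b + d) := by
  obtain ⟨x, hx, rfl⟩ : ∃ x, 0 ≤ x ∧ x ^ 2 = a := ⟨√a, sqrt_nonneg a, sq_sqrt ha⟩
  obtain ⟨y, hy, rfl⟩ : ∃ y, 0 ≤ y ∧ y ^ 2 = b := ⟨√b, sqrt_nonneg b, sq_sqrt hb⟩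
  obtain ⟨z, hz, rfl⟩ : ∃ z, 0 ≤ z ∧ z ^ 2 = c := ⟨√c, sqrt_nonneg c, sq_sqrt hc⟩
  obtain ⟨w, hw, rfl⟩ : ∃ w, 0 ≤ w ∧ w ^ 2 = d := ⟨√d, sqrt_nonneg d, sq_sqrt hd⟩
  rw [sqrt_sq hx, sqrt_sq hy, sqrt_sq hz, sqrt_sq hw, ← sqrt_mul (by positivity)]
  exact le_sqrt_of_sq_le (by nlinarith [sq_nonneg (x * w - z * y)])

section MaximalCorrelation

variable {Ω α β : Type*} [MeasurableSpace Ω] [MeasurableSpace α] [MeasurableSpace β]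
  {μ : Measure Ω} {X : Ω → α} {Y : Ω → β}

lemma pearson_le_one [IsFiniteMeasure μ] {U V : Ω → ℝ} (hU : MemLp U 2 μ) (hV : MemLp V 2 μ) :
    pearson μ U V ≤ 1 :=
  div_le_one_of_le₀ ((le_abs_self _).trans (abs_covariance_le_sqrt_variance_mul hU hV))
    (by positivity)

lemma pearson_neg_right {U V : Ω → ℝ} : pearson μ U (fun ω => -V ω) = -pearson μ U V := by
  change cov[U, fun ω => -V ω; μ] / _ = -(cov[U, V; μ] / _)
  rw [covariance_fun_neg_right, variance_fun_neg, neg_div]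

def corrSet (μ : Measure Ω) (X : Ω → α) (Y : Ω → β) : Set ℝ :=
  {r | ∃ f : α → ℝ, ∃ g : β → ℝ, Measurable f ∧ Measurable g ∧
    MemLp (f ∘ X) 2 μ ∧ MemLp (g ∘ Y) 2 μ ∧
    variance (f ∘ X) μ ≠ 0 ∧ variance (g ∘ Y) μ ≠ 0 ∧
    r = pearson μ (f ∘ X) (g ∘ Y)}

lemma maxCorr_eq_sSup_corrSet : maxCorr μ X Y = sSup (corrSet μ X Y) := rfl

lemma bddAbove_corrSet [IsFiniteMeasure μ] : BddAbove (corrSet μ X Y) :=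
  ⟨1, by rintro _ ⟨f, g, -, -, hfX, hgY, -, -, rfl⟩; exact pearson_le_one hfX hgY⟩

lemma neg_mem_corrSet {r : ℝ} (hr : r ∈ corrSet μ X Y) : -r ∈ corrSet μ X Y := by
  obtain ⟨f, g, hf, hg, hfX, hgY, hvf, hvg, rfl⟩ := hr
  exact ⟨f, fun b => -g b, hf, hg.neg, hfX, hgY.neg, hvf,
    by rwa [Function.comp_def, variance_fun_neg], pearson_neg_right.symm⟩

lemma maxCorr_nonneg [IsFiniteMeasure μ] : 0 ≤ maxCorr μ X Y := by
  rw [maxCorr_eq_sSup_corrSet]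
  rcases (corrSet μ X Y).eq_empty_or_nonempty with h | ⟨r, hr⟩
  · rw [h, Real.sSup_empty]
  · have := le_csSup bddAbove_corrSet hr
    have := le_csSup bddAbove_corrSet (neg_mem_corrSet hr)
    linarith

lemma covariance_le_maxCorr_mul [IsFiniteMeasure μ] {f : α → ℝ} {g : β → ℝ}
    (hf : Measurable f) (hg : Measurable g) (hfX : MemLp (f ∘ X) 2 μ) (hgY : MemLp (g ∘ Y) 2 μ) :
    cov[f ∘ X, g ∘ Y; μ] ≤ maxCorr μ X Y * (√Var[f ∘ X; μ] * √Var[g ∘ Y; μ]) := by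
  have hcs := (le_abs_self _).trans (abs_covariance_le_sqrt_variance_mul hfX hgY)
  rcases (mul_nonneg (sqrt_nonneg Var[f ∘ X; μ]) (sqrt_nonneg Var[g ∘ Y; μ])).eq_or_lt
    with hsd | hsd
  · rw [← hsd] at hcs ⊢
    rwa [mul_zero]
  have hmem : pearson μ (f ∘ X) (g ∘ Y) ∈ corrSet μ X Y :=
    ⟨f, g, hf, hg, hfX, hgY, fun h => by simp [h] at hsd, fun h => by simp [h] at hsd, rfl⟩
  rw [← div_le_iff₀ hsd]
  exact le_csSup bddAbove_corrSet hmem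

lemma maxCorr_le_of_forall_covariance_le {c : ℝ} (hc : 0 ≤ c)
    (h : ∀ f : α → ℝ, ∀ g : β → ℝ, Measurable f → Measurable g → MemLp (f ∘ X) 2 μ →
      MemLp (g ∘ Y) 2 μ → cov[f ∘ X, g ∘ Y; μ] ≤ c * (√Var[f ∘ X; μ] * √Var[g ∘ Y; μ])) :
    maxCorr μ X Y ≤ c := by
  refine Real.sSup_le ?_ hc
  rintro _ ⟨f, g, hf, hg, hfX, hgY, hvf, hvg, rfl⟩
  have hsd : 0 < √Var[f ∘ X; μ] * √Var[g ∘ Y; μ] := by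
    have := variance_nonneg (f ∘ X) μ
    have := variance_nonneg (g ∘ Y) μ
    positivity
  exact (div_le_iff₀ hsd).2 (h f g hf hg hfX hgY)

lemma maxCorr_comp_le [IsFiniteMeasure μ] {α' β' : Type*} [MeasurableSpace α']
    [MeasurableSpace β'] {a : α → α'} {b : β → β'} (ha : Measurable a) (hb : Measurable b) :
    maxCorr μ (a ∘ X) (b ∘ Y) ≤ maxCorr μ X Y :=
  maxCorr_le_of_forall_covariance_le maxCorr_nonneg fun _ _ hf hg hfX hgY =>
    covariance_le_maxCorr_mul (hf.comp ha) (hg.comp hb) hfX hgY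

lemma pearson_map {Ω' : Type*} [MeasurableSpace Ω'] {T : Ω → Ω'} {U V : Ω' → ℝ}
    (hT : AEMeasurable T μ) (hU : AEStronglyMeasurable U (μ.map T))
    (hV : AEStronglyMeasurable V (μ.map T)) :
    pearson (μ.map T) U V = pearson μ (U ∘ T) (V ∘ T) := by
  change cov[U, V; μ.map T] / _ = cov[U ∘ T, V ∘ T; μ] / _
  rw [covariance_map hU hV hT, variance_map hU.aemeasurable hT, variance_map hV.aemeasurable hT]

lemma corrSet_map {E : Type*} [MeasurableSpace E] {T : Ω → E} {A : E → α} {B : E → β}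
    (hT : AEMeasurable T μ) (hA : Measurable A) (hB : Measurable B) :
    corrSet (μ.map T) A B = corrSet μ (A ∘ T) (B ∘ T) := by
  ext r
  refine exists₂_congr fun f g => and_congr_right fun hf => and_congr_right fun hg => ?_
  have hfA := (hf.comp hA).aestronglyMeasurable (μ := μ.map T)
  have hgB := (hg.comp hB).aestronglyMeasurable (μ := μ.map T)
  rw [memLp_map_measure_iff hfA hT, memLp_map_measure_iff hgB hT, variance_map hfA.aemeasurable hT,
    variance_map hgB.aemeasurable hT, pearson_map hT hfA hgB]
  rfl

lemma maxCorr_map {E : Type*} [MeasurableSpace E] {T : Ω → E} {A : E → α} {B : E → β}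
    (hT : AEMeasurable T μ) (hA : Measurable A) (hB : Measurable B) :
    maxCorr (μ.map T) A B = maxCorr μ (A ∘ T) (B ∘ T) :=
  congrArg sSup (corrSet_map hT hA hB)

end MaximalCorrelation

lemma sq_integral_le_integral_sq {Ω : Type*} [MeasurableSpace Ω] {μ : Measure Ω}
    [IsProbabilityMeasure μ] {U : Ω → ℝ} (hU : MemLp U 2 μ) :
    (∫ ω, U ω ∂μ) ^ 2 ≤ ∫ ω, U ω ^ 2 ∂μ := by
  have := variance_nonneg U μ
  rw [variance_eq_sub hU] at this
  exact sub_nonneg.1 this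

section Prod

variable {γ δ : Type*} [MeasurableSpace γ] [MeasurableSpace δ] {μ : Measure γ} {ν : Measure δ}
  {F G : γ × δ → ℝ}

lemma MeasureTheory.MemLp.prod_right_ae [SFinite μ] [SFinite ν] (hF : MemLp F 2 (μ.prod ν)) :
    ∀ᵐ x ∂μ, MemLp (fun y => F (x, y)) 2 ν := by
  filter_upwards [hF.integrable_sq.prod_right_ae, hF.aestronglyMeasurable.prodMk_left]
    with x hx hFx
  exact (memLp_two_iff_integrable_sq hFx).2 hx

lemma MeasureTheory.MemLp.integral_prod_right [SFinite μ] [IsProbabilityMeasure ν]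
    (hF : MemLp F 2 (μ.prod ν)) : MemLp (fun x => ∫ y, F (x, y) ∂ν) 2 μ := by
  have hmeas := hF.aestronglyMeasurable.integral_prod_right'
  refine (memLp_two_iff_integrable_sq hmeas).2 <|
    hF.integrable_sq.integral_prod_left.mono' (hmeas.pow 2) ?_
  filter_upwards [hF.prod_right_ae] with x hFx
  rw [Real.norm_eq_abs, abs_of_nonneg (sq_nonneg _)]
  exact sq_integral_le_integral_sq hFx

variable [IsProbabilityMeasure μ] [IsProbabilityMeasure ν]

lemma ae_covariance_slice_eq_sub (hF : MemLp F 2 (μ.prod ν)) (hG : MemLp G 2 (μ.prod ν)) :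
    ∀ᵐ x ∂μ, cov[fun y => F (x, y), fun y => G (x, y); ν] =
      ∫ y, F (x, y) * G (x, y) ∂ν - (∫ y, F (x, y) ∂ν) * ∫ y, G (x, y) ∂ν := by
  filter_upwards [hF.prod_right_ae, hG.prod_right_ae] with x hFx hGx
  exact covariance_eq_sub hFx hGx

lemma integrable_covariance_slice (hF : MemLp F 2 (μ.prod ν)) (hG : MemLp G 2 (μ.prod ν)) :
    Integrable (fun x => cov[fun y => F (x, y), fun y => G (x, y); ν]) μ := by
  have hFG : Integrable (fun p => F p * G p) (μ.prod ν) := hF.integrable_mul hG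
  exact (hFG.integral_prod_left.sub
    (hF.integral_prod_right.integrable_mul hG.integral_prod_right)).congr
    ((ae_covariance_slice_eq_sub hF hG).mono fun _ hx => hx.symm)

theorem covariance_prod_eq_integral_covariance_add (hF : MemLp F 2 (μ.prod ν))
    (hG : MemLp G 2 (μ.prod ν)) :
    cov[F, G; μ.prod ν] = ∫ x, cov[fun y => F (x, y), fun y => G (x, y); ν] ∂μ +
      cov[fun x => ∫ y, F (x, y) ∂ν, fun x => ∫ y, G (x, y) ∂ν; μ] := by
  have hFG : Integrable (fun p => F p * G p) (μ.prod ν) := hF.integrable_mul hG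
  have hFG' : Integrable (fun x => (∫ y, F (x, y) ∂ν) * ∫ y, G (x, y) ∂ν) μ :=
    hF.integral_prod_right.integrable_mul hG.integral_prod_right
  rw [integral_congr_ae (ae_covariance_slice_eq_sub hF hG),
    integral_sub hFG.integral_prod_left hFG',
    covariance_eq_sub hF hG, covariance_eq_sub hF.integral_prod_right hG.integral_prod_right]
  simp only [Pi.mul_apply]
  rw [integral_prod _ hFG, integral_prod _ (hF.integrable one_le_two),
    integral_prod _ (hG.integrable one_le_two)]
  ring

lemma variance_slice_ae_eq_covariance (hF : MemLp F 2 (μ.prod ν)) :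
    (fun x => Var[fun y => F (x, y); ν]) =ᵐ[μ]
      fun x => cov[fun y => F (x, y), fun y => F (x, y); ν] := by
  filter_upwards [hF.prod_right_ae] with x hFx
  exact (covariance_self hFx.aemeasurable).symm

lemma integrable_variance_slice (hF : MemLp F 2 (μ.prod ν)) :
    Integrable (fun x => Var[fun y => F (x, y); ν]) μ :=
  (integrable_covariance_slice hF hF).congr (variance_slice_ae_eq_covariance hF).symm

theorem variance_prod_eq_integral_variance_add (hF : MemLp F 2 (μ.prod ν)) :
    Var[F; μ.prod ν] = ∫ x, Var[fun y => F (x, y); ν] ∂μ + Var[fun x => ∫ y, F (x, y) ∂ν; μ] := by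
  rw [← covariance_self hF.aemeasurable, covariance_prod_eq_integral_covariance_add hF hF,
    integral_congr_ae (variance_slice_ae_eq_covariance hF),
    covariance_self hF.integral_prod_right.aemeasurable]

end Prod

section CsakiFischer

variable {α₁ β₁ α₂ β₂ : Type*} [MeasurableSpace α₁] [MeasurableSpace β₁]
  [MeasurableSpace α₂] [MeasurableSpace β₂]
  {ν₁ : Measure (α₁ × β₁)} {ν₂ : Measure (α₂ × β₂)}
  [IsProbabilityMeasure ν₁] [IsProbabilityMeasure ν₂]

theorem covariance_prod_le_max_maxCorr_mul {f : α₁ × α₂ → ℝ} {g : β₁ × β₂ → ℝ}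
    (hf : Measurable f) (hg : Measurable g)
    (hF : MemLp (fun p : (α₁ × β₁) × (α₂ × β₂) => f (p.1.1, p.2.1)) 2 (ν₁.prod ν₂))
    (hG : MemLp (fun p : (α₁ × β₁) × (α₂ × β₂) => g (p.1.2, p.2.2)) 2 (ν₁.prod ν₂)) :
    cov[fun p => f (p.1.1, p.2.1), fun p => g (p.1.2, p.2.2); ν₁.prod ν₂] ≤
      max (maxCorr ν₁ Prod.fst Prod.snd) (maxCorr ν₂ Prod.fst Prod.snd) *
        (√Var[fun p => f (p.1.1, p.2.1); ν₁.prod ν₂] *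
          √Var[fun p => g (p.1.2, p.2.2); ν₁.prod ν₂]) := by
  set R₁ := maxCorr ν₁ Prod.fst Prod.snd
  set R₂ := maxCorr ν₂ Prod.fst Prod.snd
  set F := fun p : (α₁ × β₁) × (α₂ × β₂) => f (p.1.1, p.2.1)
  set G := fun p : (α₁ × β₁) × (α₂ × β₂) => g (p.1.2, p.2.2)
  set vF := fun x => Var[fun y => F (x, y); ν₂]
  set vG := fun x => Var[fun y => G (x, y); ν₂]
  set F' := fun x => ∫ y, F (x, y) ∂ν₂
  set G' := fun x => ∫ y, G (x, y) ∂ν₂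
  have hR₂ : 0 ≤ R₂ := maxCorr_nonneg
  have hM : 0 ≤ max R₁ R₂ := maxCorr_nonneg.trans (le_max_left _ _)
  have hvF : Integrable vF ν₁ := integrable_variance_slice hF
  have hvG : Integrable vG ν₁ := integrable_variance_slice hG
  have hvF0 : 0 ≤ᵐ[ν₁] vF := Filter.Eventually.of_forall fun _ => variance_nonneg _ _
  have hvG0 : 0 ≤ᵐ[ν₁] vG := Filter.Eventually.of_forall fun _ => variance_nonneg _ _
  -- given the first pair `x`, `F` and `G` are functions of `X₂` and `Y₂` respectively
  have hinner : ∀ᵐ x ∂ν₁, cov[fun y => F (x, y), fun y => G (x, y); ν₂] ≤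
      R₂ * (√(vF x) * √(vG x)) := by
    filter_upwards [hF.prod_right_ae, hG.prod_right_ae] with x hFx hGx
    exact covariance_le_maxCorr_mul (f := fun a => f (x.1, a)) (g := fun b => g (x.2, b))
      (by fun_prop) (by fun_prop) hFx hGx
  -- the conditional means of `F` and `G` are functions of `X₁` and `Y₁` respectively
  have houter : cov[F', G'; ν₁] ≤ R₁ * (√Var[F'; ν₁] * √Var[G'; ν₁]) := by
    have hf' : Measurable fun z : α₁ × (α₂ × β₂) => f (z.1, z.2.1) := by fun_prop
    have hg' : Measurable fun z : β₁ × (α₂ × β₂) => g (z.1, z.2.2) := by fun_prop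
    exact covariance_le_maxCorr_mul (X := Prod.fst) (Y := Prod.snd)
      hf'.stronglyMeasurable.integral_prod_right'.measurable
      hg'.stronglyMeasurable.integral_prod_right'.measurable
      hF.integral_prod_right hG.integral_prod_right
  calc cov[F, G; ν₁.prod ν₂]
      = ∫ x, cov[fun y => F (x, y), fun y => G (x, y); ν₂] ∂ν₁ + cov[F', G'; ν₁] :=
        covariance_prod_eq_integral_covariance_add hF hG
    _ ≤ ∫ x, R₂ * (√(vF x) * √(vG x)) ∂ν₁ + R₁ * (√Var[F'; ν₁] * √Var[G'; ν₁]) :=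
        add_le_add (integral_mono_ae (integrable_covariance_slice hF hG)
          (((memLp_two_sqrt hvF hvF0).integrable_mul (memLp_two_sqrt hvG hvG0)).const_mul R₂)
          hinner) houter
    _ ≤ R₂ * (√(∫ x, vF x ∂ν₁) * √(∫ x, vG x ∂ν₁)) +
          R₁ * (√Var[F'; ν₁] * √Var[G'; ν₁]) := by
        rw [integral_const_mul]
        gcongr
        exact integral_sqrt_mul_sqrt_le hvF hvG hvF0 hvG0
    _ ≤ max R₁ R₂ * (√(∫ x, vF x ∂ν₁) * √(∫ x, vG x ∂ν₁) + √Var[F'; ν₁] * √Var[G'; ν₁]) := by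
        rw [mul_add]
        gcongr
        exacts [le_max_right _ _, le_max_left _ _]
    _ ≤ max R₁ R₂ * (√(∫ x, vF x ∂ν₁ + Var[F'; ν₁]) * √(∫ x, vG x ∂ν₁ + Var[G'; ν₁])) := by
        gcongr
        exact sqrt_mul_sqrt_add_sqrt_mul_sqrt_le (integral_nonneg fun _ => variance_nonneg _ _)
          (integral_nonneg fun _ => variance_nonneg _ _) (variance_nonneg _ _) (variance_nonneg _ _)
    _ = max R₁ R₂ * (√Var[F; ν₁.prod ν₂] * √Var[G; ν₁.prod ν₂]) := by
        rw [variance_prod_eq_integral_variance_add hF, variance_prod_eq_integral_variance_add hG]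

theorem maxCorr_prod_le :
    maxCorr (ν₁.prod ν₂) (fun p => (p.1.1, p.2.1)) (fun p => (p.1.2, p.2.2)) ≤
      max (maxCorr ν₁ Prod.fst Prod.snd) (maxCorr ν₂ Prod.fst Prod.snd) :=
  maxCorr_le_of_forall_covariance_le (maxCorr_nonneg.trans (le_max_left _ _))
    fun _ _ hf hg hF hG => covariance_prod_le_max_maxCorr_mul hf hg hF hG

end CsakiFischer

/-- Csáki–Fischer identity: if `(X₁,Y₁)` and `(X₂,Y₂)` are independent, then the maximal
correlation of the pairs is the maximum of the maximal correlations. -/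
theorem csaki_fischer {Ω α₁ β₁ α₂ β₂ : Type*} [MeasurableSpace Ω]
    [MeasurableSpace α₁] [MeasurableSpace β₁] [MeasurableSpace α₂] [MeasurableSpace β₂]
    (μ : Measure Ω) [IsProbabilityMeasure μ]
    (X₁ : Ω → α₁) (Y₁ : Ω → β₁) (X₂ : Ω → α₂) (Y₂ : Ω → β₂)
    (hX₁ : Measurable X₁) (hY₁ : Measurable Y₁) (hX₂ : Measurable X₂) (hY₂ : Measurable Y₂)
    (hindep : IndepFun (fun ω => (X₁ ω, Y₁ ω)) (fun ω => (X₂ ω, Y₂ ω)) μ) :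
    maxCorr μ (fun ω => (X₁ ω, X₂ ω)) (fun ω => (Y₁ ω, Y₂ ω)) =
      max (maxCorr μ X₁ Y₁) (maxCorr μ X₂ Y₂) := by
  have hZ₁ : Measurable fun ω => (X₁ ω, Y₁ ω) := hX₁.prodMk hY₁
  have hZ₂ : Measurable fun ω => (X₂ ω, Y₂ ω) := hX₂.prodMk hY₂
  have hlaw : μ.map (fun ω => ((X₁ ω, Y₁ ω), (X₂ ω, Y₂ ω))) =
      (μ.map fun ω => (X₁ ω, Y₁ ω)).prod (μ.map fun ω => (X₂ ω, Y₂ ω)) :=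
    (indepFun_iff_map_prod_eq_prod_map_map hZ₁.aemeasurable hZ₂.aemeasurable).1 hindep
  have := Measure.isProbabilityMeasure_map (μ := μ) hZ₁.aemeasurable
  have := Measure.isProbabilityMeasure_map (μ := μ) hZ₂.aemeasurable
  refine le_antisymm ?_ (max_le
    (maxCorr_comp_le (X := fun ω => (X₁ ω, X₂ ω)) (Y := fun ω => (Y₁ ω, Y₂ ω))
      (a := Prod.fst) (b := Prod.fst) measurable_fst measurable_fst)
    (maxCorr_comp_le (X := fun ω => (X₁ ω, X₂ ω)) (Y := fun ω => (Y₁ ω, Y₂ ω))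
      (a := Prod.snd) (b := Prod.snd) measurable_snd measurable_snd))
  calc maxCorr μ (fun ω => (X₁ ω, X₂ ω)) (fun ω => (Y₁ ω, Y₂ ω))
      = maxCorr (μ.map fun ω => ((X₁ ω, Y₁ ω), (X₂ ω, Y₂ ω)))
          (fun p => (p.1.1, p.2.1)) (fun p => (p.1.2, p.2.2)) :=
        (maxCorr_map (A := fun p : (α₁ × β₁) × (α₂ × β₂) => (p.1.1, p.2.1))
          (B := fun p : (α₁ × β₁) × (α₂ × β₂) => (p.1.2, p.2.2))
          (hZ₁.prodMk hZ₂).aemeasurable (by fun_prop) (by fun_prop)).symm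
    _ ≤ max (maxCorr (μ.map fun ω => (X₁ ω, Y₁ ω)) Prod.fst Prod.snd)
          (maxCorr (μ.map fun ω => (X₂ ω, Y₂ ω)) Prod.fst Prod.snd) := by
        rw [hlaw]
        exact maxCorr_prod_le
    _ = max (maxCorr μ X₁ Y₁) (maxCorr μ X₂ Y₂) := by
        rw [maxCorr_map hZ₁.aemeasurable measurable_fst measurable_snd,
          maxCorr_map hZ₂.aemeasurable measurable_fst measurable_snd]
        rfl
end

section
/- Let T be a uniformly random subset of [n] of size n−1, and given T let S be a uniformly random subset of T of size k. Then R(S,T) = √(k/((n−1)(n−k))). -/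
/-!
Write `T = [n] \ {I}`. The pair `(S, I)` is uniform over the `k`-sets `S` and points `I ∉ S`,
so every moment of `f(S)` and `g(T)` is a finite average over such pairs. After centring,
`g(T) = b(I)` with `∑ b = 0`, and `Cov(f(S), g(T))` is an average of `f(S) · ∑_{i ∉ S} b i`.
Counting the `k`-sets avoiding one or two given points gives
`∑_S (∑_{i ∉ S} b i)² = (C(n-1,k) - C(n-2,k)) ∑ b²`, so Cauchy–Schwarz over `S` bounds
`ρ²` by `k / ((n-1)(n-k))`. Equality holds for `f = g = (t ↦ ∑_{i ∉ t} b i)`, which is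
proportional to the conditional expectation of `b(I)` given `S`.
-/

open MeasureTheory ProbabilityTheory Real

instance finsetMeasurableSpace {n : ℕ} : MeasurableSpace (Finset (Fin n)) := ⊤

open Finset

section MaximalCorrelation

variable {Ω : Type*} [MeasurableSpace Ω] {μ : Measure Ω}

lemma pearson_eq_covariance_div_sqrt (U V : Ω → ℝ) :
    pearson μ U V = cov[U, V; μ] / √(Var[U; μ] * Var[V; μ]) := by
  rw [pearson, sqrt_mul (variance_nonneg U μ)]
  rfl

lemma pearson_le_sqrt_of_sq_le {U V : Ω → ℝ} {r : ℝ}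
    (h : cov[U, V; μ] ^ 2 ≤ r * (Var[U; μ] * Var[V; μ])) : pearson μ U V ≤ √r := by
  rw [pearson_eq_covariance_div_sqrt]
  refine div_le_of_le_mul₀ (sqrt_nonneg _) (sqrt_nonneg r) ?_
  calc cov[U, V; μ] ≤ √(cov[U, V; μ] ^ 2) := by rw [sqrt_sq_eq_abs]; exact le_abs_self _
    _ ≤ √(r * (Var[U; μ] * Var[V; μ])) := sqrt_le_sqrt h
    _ = √r * √(Var[U; μ] * Var[V; μ]) :=
        sqrt_mul' _ (mul_nonneg (variance_nonneg U μ) (variance_nonneg V μ))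

lemma pearson_eq_sqrt_of_sq_eq {U V : Ω → ℝ} {r : ℝ} (hU : Var[U; μ] ≠ 0) (hV : Var[V; μ] ≠ 0)
    (hcov : 0 ≤ cov[U, V; μ]) (h : cov[U, V; μ] ^ 2 = r * (Var[U; μ] * Var[V; μ])) :
    pearson μ U V = √r := by
  have hUV : 0 < Var[U; μ] * Var[V; μ] :=
    mul_pos ((variance_nonneg U μ).lt_of_ne' hU) ((variance_nonneg V μ).lt_of_ne' hV)
  have hr : 0 ≤ r := nonneg_of_mul_nonneg_left (h ▸ sq_nonneg _) hUV
  rw [pearson_eq_covariance_div_sqrt, div_eq_iff (sqrt_pos.2 hUV).ne', ← sqrt_mul hr, ← h,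
    sqrt_sq hcov]

lemma memLp_comp_of_finite {α : Type*} [MeasurableSpace α] [Finite α]
    [DiscreteMeasurableSpace α] [IsFiniteMeasure μ] {X : Ω → α} (hX : Measurable X)
    (f : α → ℝ) (p : ENNReal) :
    MemLp (f ∘ X) p μ := by
  obtain ⟨C, hC⟩ := Finite.exists_le (‖f ·‖)
  exact MemLp.of_bound (Measurable.of_discrete.comp hX).aestronglyMeasurable C
    (.of_forall fun ω => hC (X ω))

lemma maxCorr_eq_of_forall_le {α β : Type*} [MeasurableSpace α] [MeasurableSpace β] [Finite α]
    [Finite β] [DiscreteMeasurableSpace α] [DiscreteMeasurableSpace β] [IsFiniteMeasure μ]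
    {X : Ω → α} {Y : Ω → β} (hX : Measurable X) (hY : Measurable Y) {r : ℝ}
    (hle : ∀ f g, pearson μ (f ∘ X) (g ∘ Y) ≤ r)
    (hex : ∃ f g, Var[f ∘ X; μ] ≠ 0 ∧ Var[g ∘ Y; μ] ≠ 0 ∧ pearson μ (f ∘ X) (g ∘ Y) = r) :
    maxCorr μ X Y = r := by
  obtain ⟨f, g, hf, hg, heq⟩ := hex
  refine IsGreatest.csSup_eq ⟨⟨f, g, .of_discrete, .of_discrete, memLp_comp_of_finite hX f 2,
    memLp_comp_of_finite hY g 2, hf, hg, heq.symm⟩, ?_⟩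
  rintro _ ⟨f, g, -, -, -, -, -, -, rfl⟩
  exact hle f g

end MaximalCorrelation

lemma Nat.cast_choose_sub_choose_pred {m k : ℕ} (hm : 1 ≤ m) (hk : 1 ≤ k) :
    (m.choose k : ℝ) - (m - 1).choose k = k / m * m.choose k := by
  obtain ⟨m, rfl⟩ := Nat.exists_eq_add_of_le' hm
  obtain ⟨k, rfl⟩ := Nat.exists_eq_add_of_le' hk
  have hmul : ((m + 1 : ℕ) : ℝ) * m.choose k = (m + 1).choose (k + 1) * (k + 1 : ℕ) := by
    exact_mod_cast Nat.add_one_mul_choose_eq m k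
  have hpascal : ((m + 1).choose (k + 1) : ℝ) = m.choose k + m.choose (k + 1) := by
    exact_mod_cast Nat.choose_succ_succ' m k
  rw [Nat.add_sub_cancel, hpascal]
  rw [hpascal] at hmul
  push_cast at hmul ⊢
  field_simp
  linear_combination hmul

lemma inv_mul_choose_sub_choose_pred {n k : ℕ} (hk : 1 ≤ k) (hkn : k ≤ n - 1) :
    ((n : ℝ) * (n - 1).choose k)⁻¹ * ((n - 1).choose k - (n - 2).choose k) =
      k / ((n - 1) * (n - k)) * ((n - k : ℕ) * (n : ℝ)⁻¹) := by
  rw [show n - 2 = n - 1 - 1 by omega, Nat.cast_choose_sub_choose_pred (by omega) hk,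
    Nat.cast_sub (by omega : k ≤ n), Nat.cast_sub (by omega : 1 ≤ n)]
  have : ((n - 1).choose k : ℝ) ≠ 0 := by exact_mod_cast (Nat.choose_pos hkn).ne'
  have : (n : ℝ) ≠ 0 := by exact_mod_cast (by omega : n ≠ 0)
  have : (n : ℝ) - 1 ≠ 0 := sub_ne_zero.2 (by exact_mod_cast (by omega : n ≠ 1))
  have : (n : ℝ) - k ≠ 0 := sub_ne_zero.2 (by exact_mod_cast (by omega : n ≠ k))
  push_cast
  field_simp

section Combinatorics

variable {α : Type*} [Fintype α] [DecidableEq α]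

lemma exists_sum_eq_zero_sum_sq_pos [Nontrivial α] :
    ∃ h : α → ℝ, ∑ i, h i = 0 ∧ 0 < ∑ i, h i ^ 2 := by
  obtain ⟨a, b, hab⟩ := exists_pair_ne α
  refine ⟨Pi.single a 1 - Pi.single b 1, by simp [sum_sub_distrib], ?_⟩
  exact sum_pos' (fun _ _ => sq_nonneg _) ⟨a, mem_univ a, by simp [hab]⟩

def complSum (h : α → ℝ) (t : Finset α) : ℝ := ∑ i ∈ tᶜ, h i

@[simp] lemma complSum_compl_singleton (h : α → ℝ) (i : α) : complSum h {i}ᶜ = h i := by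
  simp [complSum]

lemma sum_powersetCard_sum_compl {M : Type*} [AddCommMonoid M] (k : ℕ) (H : α → M) :
    ∑ s ∈ powersetCard k univ, ∑ i ∈ sᶜ, H i = (Fintype.card α - 1).choose k • ∑ i, H i := by
  rw [sum_comm' (t' := univ) (s' := fun i => powersetCard k {i}ᶜ) (by simp [and_comm]),
    smul_sum]
  simp [card_compl]

lemma sum_powersetCard_sum_compl_sq {R : Type*} [CommRing R] (k : ℕ) (H : α → R)
    (hH : ∑ i, H i = 0) :
    ∑ s ∈ powersetCard k univ, (∑ i ∈ sᶜ, H i) ^ 2 =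
      (((Fintype.card α - 1).choose k : R) - (Fintype.card α - 2).choose k) * ∑ i, H i ^ 2 := by
  set n := Fintype.card α
  have hcoeff : ∀ a b : α, (((n - #{a, b}).choose k : ℕ) : R) =
      (n - 2).choose k + if a = b then ((n - 1).choose k - (n - 2).choose k : R) else 0 := by
    intro a b
    by_cases hab : a = b
    · simp [hab]
    · simp [hab, card_pair hab]
  calc ∑ s ∈ powersetCard k univ, (∑ i ∈ sᶜ, H i) ^ 2
      = ∑ s ∈ powersetCard k univ, ∑ p ∈ sᶜ ×ˢ sᶜ, H p.1 * H p.2 := by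
        simp only [sq, sum_mul_sum, sum_product]
    _ = ∑ p : α × α, ∑ s ∈ powersetCard k {p.1, p.2}ᶜ, H p.1 * H p.2 := by
        refine sum_comm' fun s p => ?_
        simp only [mem_powersetCard, mem_product, mem_compl, subset_univ, true_and, mem_univ,
          and_true, subset_compl_comm (s := s), insert_subset_iff, singleton_subset_iff]
        tauto
    _ = ∑ p : α × α, ((n - #{p.1, p.2}).choose k : R) * (H p.1 * H p.2) := by
        simp only [sum_const, card_powersetCard, card_compl, nsmul_eq_mul, n]
    _ = _ := by
        simp only [hcoeff, add_mul, sum_add_distrib, Fintype.sum_prod_type, ite_mul, zero_mul,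
          sum_ite_eq, mem_univ, if_true, ← mul_sum, ← sum_mul, hH]
        simp [sq, mul_sum]

lemma filter_superset_card_eq_sub_one [Nonempty α] (s : Finset α) :
    ({t | s ⊆ t ∧ #t = Fintype.card α - 1} : Finset (Finset α)) = sᶜ.image fun i => {i}ᶜ := by
  ext t
  simp only [mem_filter, mem_univ, true_and, mem_image, mem_compl]
  constructor
  · rintro ⟨hst, ht⟩
    obtain ⟨i, hi⟩ : ∃ i, tᶜ = {i} := card_eq_one.1 (by
      rw [card_compl, ht]; have := Fintype.card_pos (α := α); omega)
    refine ⟨i, fun his => ?_, by rw [← hi, compl_compl]⟩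
    exact mem_compl.1 (hi ▸ mem_singleton_self i) (hst his)
  · rintro ⟨i, hi, rfl⟩
    simp [hi, card_compl]

lemma sum_superset_card_eq_sub_one [Nonempty α] {M : Type*} [AddCommMonoid M] (s : Finset α)
    (F : Finset α → M) :
    ∑ t with s ⊆ t ∧ #t = Fintype.card α - 1, F t = ∑ i ∈ sᶜ, F {i}ᶜ := by
  rw [filter_superset_card_eq_sub_one, sum_image]
  exact fun i _ j _ hij => singleton_injective (compl_injective hij)

end Combinatorics

instance {n : ℕ} : DiscreteMeasurableSpace (Finset (Fin n)) :=
  ⟨fun _ => MeasurableSpace.measurableSet_top⟩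

def HasNestedCoatomLaw {Ω : Type*} [MeasurableSpace Ω] (μ : Measure Ω) {n : ℕ} (k : ℕ)
    (S T : Ω → Finset (Fin n)) : Prop :=
  ∀ s t : Finset (Fin n), μ {ω | S ω = s ∧ T ω = t} =
    if s ⊆ t ∧ s.card = k ∧ t.card = n - 1
      then ((n.choose (n - 1) : ENNReal) * ((n - 1).choose k : ENNReal))⁻¹ else 0

namespace HasNestedCoatomLaw

variable {Ω : Type*} [MeasurableSpace Ω] {μ : Measure Ω} [IsProbabilityMeasure μ] {n k : ℕ}
  {S T : Ω → Finset (Fin n)}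

lemma integral_comp (h : HasNestedCoatomLaw μ k S T) (hS : Measurable S) (hT : Measurable T)
    (hn : 0 < n) (φ : Finset (Fin n) → Finset (Fin n) → ℝ) :
    ∫ ω, φ (S ω) (T ω) ∂μ =
      ((n : ℝ) * (n - 1).choose k)⁻¹ * ∑ s ∈ powersetCard k univ, ∑ i ∈ sᶜ, φ s {i}ᶜ := by
  have : Nonempty (Fin n) := ⟨⟨0, hn⟩⟩
  have hST := hS.prodMk hT
  have hweight (s t : Finset (Fin n)) : (μ.map fun ω => (S ω, T ω)).real {(s, t)} =
      if s ⊆ t ∧ #s = k ∧ #t = n - 1 then ((n : ℝ) * (n - 1).choose k)⁻¹ else 0 := by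
    rw [map_measureReal_apply hST (measurableSet_singleton _), measureReal_def]
    have hpre : (fun ω => (S ω, T ω)) ⁻¹' {(s, t)} = {ω | S ω = s ∧ T ω = t} := by
      ext; simp
    rw [hpre, h s t, Nat.choose_symm (by omega), Nat.choose_one_right]
    split_ifs <;> simp
  rw [← integral_map (f := fun p => φ p.1 p.2) hST.aemeasurable
      Measurable.of_discrete.aestronglyMeasurable, integral_fintype Integrable.of_finite,
    Fintype.sum_prod_type, ← univ_filter_card_eq, sum_filter, mul_sum]
  refine sum_congr rfl fun s _ => ?_
  split_ifs with hs
  · simp only [hweight, hs, true_and, smul_eq_mul, ite_mul, zero_mul]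
    rw [← sum_filter, ← mul_sum]
    congr 1
    simpa using sum_superset_card_eq_sub_one s (φ s)
  · simp [hweight, hs]

lemma integral_comp_fst (h : HasNestedCoatomLaw μ k S T) (hS : Measurable S) (hT : Measurable T)
    (hn : 0 < n) (u : Finset (Fin n) → ℝ) :
    ∫ ω, u (S ω) ∂μ =
      ((n : ℝ) * (n - 1).choose k)⁻¹ * ((n - k : ℕ) * ∑ s ∈ powersetCard k univ, u s) := by
  rw [h.integral_comp hS hT hn fun s _ => u s, mul_sum _ u]
  congr 1
  refine sum_congr rfl fun s hs => ?_
  rw [sum_const, card_compl, Fintype.card_fin, (mem_powersetCard_univ.1 hs), nsmul_eq_mul]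

lemma integral_comp_snd (h : HasNestedCoatomLaw μ k S T) (hS : Measurable S) (hT : Measurable T)
    (hn : 0 < n) (hkn : k ≤ n - 1) (g : Finset (Fin n) → ℝ) :
    ∫ ω, g (T ω) ∂μ = (n : ℝ)⁻¹ * ∑ i, g {i}ᶜ := by
  rw [h.integral_comp hS hT hn fun _ t => g t, sum_powersetCard_sum_compl k fun i => g {i}ᶜ,
    Fintype.card_fin, nsmul_eq_mul]
  have : ((n - 1).choose k : ℝ) ≠ 0 := by exact_mod_cast (Nat.choose_pos hkn).ne'
  field_simp

lemma variance_comp_fst (h : HasNestedCoatomLaw μ k S T) (hS : Measurable S) (hT : Measurable T)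
    (hn : 0 < n) (u : Finset (Fin n) → ℝ) :
    Var[u ∘ S; μ] = ((n : ℝ) * (n - 1).choose k)⁻¹ *
      ((n - k : ℕ) * ∑ s ∈ powersetCard k univ, (u s - μ[u ∘ S]) ^ 2) := by
  rw [variance_eq_integral (Measurable.of_discrete.comp hS).aemeasurable]
  exact h.integral_comp_fst hS hT hn fun s => (u s - μ[u ∘ S]) ^ 2

lemma variance_comp_snd (h : HasNestedCoatomLaw μ k S T) (hS : Measurable S) (hT : Measurable T)
    (hn : 0 < n) (hkn : k ≤ n - 1) (g : Finset (Fin n) → ℝ) :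
    Var[g ∘ T; μ] = (n : ℝ)⁻¹ * ∑ i, (g {i}ᶜ - μ[g ∘ T]) ^ 2 := by
  rw [variance_eq_integral (Measurable.of_discrete.comp hT).aemeasurable]
  exact h.integral_comp_snd hS hT hn hkn fun t => (g t - μ[g ∘ T]) ^ 2

lemma sum_sub_integral_comp_snd (h : HasNestedCoatomLaw μ k S T) (hS : Measurable S)
    (hT : Measurable T) (hn : 0 < n) (hkn : k ≤ n - 1) (g : Finset (Fin n) → ℝ) :
    ∑ i, (g {i}ᶜ - μ[g ∘ T]) = 0 := by
  have hmean : μ[g ∘ T] = (n : ℝ)⁻¹ * ∑ i, g {i}ᶜ := h.integral_comp_snd hS hT hn hkn g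
  rw [sum_sub_distrib, sum_const, card_univ, Fintype.card_fin, nsmul_eq_mul, hmean]
  field_simp
  ring

lemma covariance_comp (h : HasNestedCoatomLaw μ k S T) (hS : Measurable S) (hT : Measurable T)
    (hn : 0 < n) (u g : Finset (Fin n) → ℝ) :
    cov[u ∘ S, g ∘ T; μ] = ((n : ℝ) * (n - 1).choose k)⁻¹ *
      ∑ s ∈ powersetCard k univ, (u s - μ[u ∘ S]) * ∑ i ∈ sᶜ, (g {i}ᶜ - μ[g ∘ T]) := by
  refine (h.integral_comp hS hT hn fun s t => (u s - μ[u ∘ S]) * (g t - μ[g ∘ T])).trans ?_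
  exact congrArg _ (sum_congr rfl fun s _ => (mul_sum _ _ _).symm)

lemma covariance_comp_sq_le (h : HasNestedCoatomLaw μ k S T) (hS : Measurable S)
    (hT : Measurable T) (hk : 1 ≤ k) (hkn : k ≤ n - 1) (u g : Finset (Fin n) → ℝ) :
    cov[u ∘ S, g ∘ T; μ] ^ 2 ≤
      (k : ℝ) / ((n - 1) * (n - k)) * (Var[u ∘ S; μ] * Var[g ∘ T; μ]) := by
  have hn : 0 < n := by omega
  set a := fun s => u s - μ[u ∘ S]
  set b := fun i : Fin n => g {i}ᶜ - μ[g ∘ T]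
  have hCS := sum_mul_sq_le_sq_mul_sq (powersetCard k univ) a fun s => ∑ i ∈ sᶜ, b i
  rw [sum_powersetCard_sum_compl_sq k b (h.sum_sub_integral_comp_snd hS hT hn hkn g),
    Fintype.card_fin] at hCS
  rw [h.covariance_comp hS hT hn, h.variance_comp_fst hS hT hn, h.variance_comp_snd hS hT hn hkn]
  calc _ = ((n : ℝ) * (n - 1).choose k)⁻¹ ^ 2 *
        (∑ s ∈ powersetCard k univ, a s * ∑ i ∈ sᶜ, b i) ^ 2 := mul_pow _ _ _
    _ ≤ ((n : ℝ) * (n - 1).choose k)⁻¹ ^ 2 * ((∑ s ∈ powersetCard k univ, a s ^ 2) *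
        ((((n - 1).choose k : ℝ) - (n - 2).choose k) * ∑ i, b i ^ 2)) := by gcongr
    _ = _ := by
      linear_combination ((n : ℝ) * (n - 1).choose k)⁻¹ * (∑ s ∈ powersetCard k univ, a s ^ 2) *
        (∑ i, b i ^ 2) * inv_mul_choose_sub_choose_pred hk hkn

lemma integral_complSum_comp_fst (h : HasNestedCoatomLaw μ k S T) (hS : Measurable S)
    (hT : Measurable T) (hn : 0 < n) {w : Fin n → ℝ} (hw : ∑ i, w i = 0) :
    μ[complSum w ∘ S] = 0 := by
  refine (h.integral_comp_fst hS hT hn (complSum w)).trans ?_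
  simp [complSum, sum_powersetCard_sum_compl, hw]

lemma integral_complSum_comp_snd (h : HasNestedCoatomLaw μ k S T) (hS : Measurable S)
    (hT : Measurable T) (hn : 0 < n) (hkn : k ≤ n - 1) {w : Fin n → ℝ} (hw : ∑ i, w i = 0) :
    μ[complSum w ∘ T] = 0 := by
  refine (h.integral_comp_snd hS hT hn hkn (complSum w)).trans ?_
  simp [hw]

lemma exists_pearson_eq_sqrt (h : HasNestedCoatomLaw μ k S T) (hS : Measurable S)
    (hT : Measurable T) (hk : 1 ≤ k) (hkn : k ≤ n - 1) :
    ∃ f g : Finset (Fin n) → ℝ, Var[f ∘ S; μ] ≠ 0 ∧ Var[g ∘ T; μ] ≠ 0 ∧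
      pearson μ (f ∘ S) (g ∘ T) = √((k : ℝ) / ((n - 1) * (n - k))) := by
  have hn : 0 < n := by omega
  have : Nontrivial (Fin n) := Fin.nontrivial_iff_two_le.2 (by omega)
  obtain ⟨w, hw, hQ⟩ := exists_sum_eq_zero_sum_sq_pos (α := Fin n)
  have hVS : Var[complSum w ∘ S; μ] = _ := h.variance_comp_fst hS hT hn (complSum w)
  have hVT : Var[complSum w ∘ T; μ] = _ := h.variance_comp_snd hS hT hn hkn (complSum w)
  have hcov : cov[complSum w ∘ S, complSum w ∘ T; μ] = _ := h.covariance_comp hS hT hn _ _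
  simp only [h.integral_complSum_comp_fst hS hT hn hw,
    h.integral_complSum_comp_snd hS hT hn hkn hw, sub_zero, complSum_compl_singleton]
    at hVS hVT hcov
  simp only [complSum, ← sq] at hVS hcov
  rw [sum_powersetCard_sum_compl_sq k w hw, Fintype.card_fin] at hVS hcov
  set r := (k : ℝ) / ((n - 1) * (n - k))
  have hD := inv_mul_choose_sub_choose_pred hk hkn
  have hVS' : Var[complSum w ∘ S; μ] =
      (n - k : ℕ) * (r * ((n - k : ℕ) * (n : ℝ)⁻¹)) * ∑ i, w i ^ 2 := by
    rw [hVS, ← hD]; ring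
  have hcov' : cov[complSum w ∘ S, complSum w ∘ T; μ] =
      r * ((n - k : ℕ) * (n : ℝ)⁻¹) * ∑ i, w i ^ 2 := by
    rw [hcov, ← hD]; ring
  have : 0 < k := hk
  have : 0 < n - k := by omega
  have : (0 : ℝ) < n - 1 := sub_pos.2 (by exact_mod_cast (by omega : 1 < n))
  have : (0 : ℝ) < n - k := sub_pos.2 (by exact_mod_cast (by omega : k < n))
  have hVS_pos : 0 < Var[complSum w ∘ S; μ] := by rw [hVS']; positivity
  have hVT_pos : 0 < Var[complSum w ∘ T; μ] := by rw [hVT]; positivity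
  exact ⟨_, _, hVS_pos.ne', hVT_pos.ne', pearson_eq_sqrt_of_sq_eq hVS_pos.ne' hVT_pos.ne'
    (by rw [hcov']; positivity) (by rw [hVS', hVT, hcov']; ring)⟩

end HasNestedCoatomLaw

theorem maxCorr_nested_uniform_subsets_coatom_general {Ω : Type*} [MeasurableSpace Ω]
    (μ : Measure Ω) [IsProbabilityMeasure μ] (n k : ℕ)
    (hk : 1 ≤ k) (hkn : k ≤ n - 1)
    (S T : Ω → Finset (Fin n)) (hS : Measurable S) (hT : Measurable T)
    (hjoint : ∀ s t : Finset (Fin n),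
      μ {ω | S ω = s ∧ T ω = t} =
        if s ⊆ t ∧ s.card = k ∧ t.card = n - 1
          then ((n.choose (n - 1) : ENNReal) * ((n - 1).choose k : ENNReal))⁻¹ else 0) :
    maxCorr μ S T = Real.sqrt ((k : ℝ) / (((n : ℝ) - 1) * ((n : ℝ) - k))) := by
  have hlaw : HasNestedCoatomLaw μ k S T := hjoint
  exact maxCorr_eq_of_forall_le hS hT
    (fun f g => pearson_le_sqrt_of_sq_le (hlaw.covariance_comp_sq_le hS hT hk hkn f g))
    (hlaw.exists_pearson_eq_sqrt hS hT hk hkn)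

/-- If `T` is a uniform `(n−1)`-subset of `[n]` and, given `T`, `S` is a uniform `k`-subset of
`T`, then `R(S,T) = √(k/((n−1)(n−k)))`. -/
theorem maxCorr_nested_uniform_subsets_coatom {Ω : Type*} [MeasurableSpace Ω]
    (μ : Measure Ω) [IsProbabilityMeasure μ] (n k : ℕ)
    (hk : 1 ≤ k) (hkn : k ≤ n - 1) (hn : 2 ≤ n)
    (S T : Ω → Finset (Fin n)) (hS : Measurable S) (hT : Measurable T)
    (hjoint : ∀ s t : Finset (Fin n),
      μ {ω | S ω = s ∧ T ω = t} =
        if s ⊆ t ∧ s.card = k ∧ t.card = n - 1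
          then ((n.choose (n - 1) : ENNReal) * ((n - 1).choose k : ENNReal))⁻¹ else 0) :
    maxCorr μ S T = Real.sqrt ((k : ℝ) / (((n : ℝ) - 1) * ((n : ℝ) - k))) :=
  maxCorr_nested_uniform_subsets_coatom_general μ n k hk hkn S T hS hT hjoint
end
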